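/- arXiv:2508.14361 — 2 statements merged into one kernel-verified Lean document; each statement's English description precedes it below -/
import Mathlib

section
/- The polynomial x^4 − x^3 − 1 has exactly one complex root of absolute value at least 1, and this root is real and lies in the interval (1.38, 1.381). -/
theorem stmt_5 :
    ∃ x : ℝ, x ^ 4 - x ^ 3 - 1 = 0 ∧ 1.38 < x ∧ x < 1.381 ∧
      ∀ z : ℂ, z ^ 4 - z ^ 3 - 1 = 0 → 1 ≤ ‖z‖ → z = (x : ℂ) := by
  -- real root x in (1.38, 1.381)
  have hc : ∀ a b : ℝ, ContinuousOn (fun t : ℝ => t ^ 4 - t ^ 3 - 1) (Set.Icc a b) := by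
    intro a b; fun_prop
  obtain ⟨x, hxmem, hx0⟩ :
      ∃ x ∈ Set.Ioo (1.38 : ℝ) 1.381, (fun t : ℝ => t ^ 4 - t ^ 3 - 1) x = 0 := by
    have h := intermediate_value_Ioo (by norm_num : (1.38:ℝ) ≤ 1.381) (hc 1.38 1.381)
    have h0 : (0:ℝ) ∈ Set.Ioo ((fun t : ℝ => t ^ 4 - t ^ 3 - 1) 1.38)
        ((fun t : ℝ => t ^ 4 - t ^ 3 - 1) 1.381) := by norm_num
    exact h h0
  obtain ⟨y, hymem, hy0⟩ :
      ∃ y ∈ Set.Ioo (-0.82 : ℝ) (-0.81), (fun t : ℝ => t ^ 4 - t ^ 3 - 1) y = 0 := by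
    have h := intermediate_value_Ioo' (by norm_num : (-0.82:ℝ) ≤ -0.81) (hc (-0.82) (-0.81))
    have h0 : (0:ℝ) ∈ Set.Ioo ((fun t : ℝ => t ^ 4 - t ^ 3 - 1) (-0.81))
        ((fun t : ℝ => t ^ 4 - t ^ 3 - 1) (-0.82)) := by norm_num
    exact h h0
  simp only at hx0 hy0
  obtain ⟨hx1, hx2⟩ := hxmem
  obtain ⟨hy1, hy2⟩ := hymem
  refine ⟨x, hx0, hx1, hx2, ?_⟩
  intro z hz habs
  have hxy : y ≠ x := by nlinarith
  -- q1(y) = 0 where q1 is the quotient of f by (t - x)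
  have hq1y : y ^ 3 + (x - 1) * y ^ 2 + (x ^ 2 - x) * y + (x ^ 3 - x ^ 2) = 0 := by
    have key : (y - x) * (y ^ 3 + (x - 1) * y ^ 2 + (x ^ 2 - x) * y + (x ^ 3 - x ^ 2)) = 0 := by
      linear_combination hy0 - hx0
    rcases mul_eq_zero.mp key with h | h
    · exact absurd (sub_eq_zero.mp h) hxy
    · exact h
  set a : ℝ := x + y - 1 with ha
  set b : ℝ := x ^ 2 + x * y + y ^ 2 - x - y with hb
  have hb1 : b < 1 := by nlinarith
  have hdisc : a ^ 2 < 4 * b := by nlinarith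
  -- factorization over ℂ
  have hfact : (z - (x:ℂ)) * ((z - (y:ℂ)) * (z ^ 2 + (a:ℂ) * z + (b:ℂ))) = 0 := by
    have hx0' : (x:ℂ) ^ 4 - (x:ℂ) ^ 3 - 1 = 0 := by exact_mod_cast congrArg (Complex.ofReal ·) hx0
    have hq1y' : (y:ℂ) ^ 3 + ((x:ℂ) - 1) * (y:ℂ) ^ 2 + ((x:ℂ) ^ 2 - (x:ℂ)) * (y:ℂ)
        + ((x:ℂ) ^ 3 - (x:ℂ) ^ 2) = 0 := by exact_mod_cast congrArg (Complex.ofReal ·) hq1y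
    rw [ha, hb]
    push_cast
    linear_combination hz - hx0' - (z - (x:ℂ)) * hq1y'
  rcases mul_eq_zero.mp hfact with h | h
  · exact sub_eq_zero.mp h
  rcases mul_eq_zero.mp h with h | h
  · -- z = y, but |y| < 1
    have hzy : z = (y:ℂ) := sub_eq_zero.mp h
    rw [hzy, Complex.norm_real, Real.norm_eq_abs] at habs
    rw [abs_of_neg (by linarith)] at habs
    linarith
  · -- quadratic case: |z|^2 = b < 1
    exfalso
    have hconj : (starRingEnd ℂ) z ^ 2 + (a:ℂ) * (starRingEnd ℂ) z + (b:ℂ) = 0 := by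
      have := congrArg (starRingEnd ℂ) h
      simpa using this
    have hne : z ≠ (starRingEnd ℂ) z := by
      intro heq
      have him : z.im = 0 := by
        have := congrArg Complex.im heq
        simp [Complex.conj_im] at this
        linarith
      have hre : z.re ^ 2 + a * z.re + b = 0 := by
        have := congrArg Complex.re h
        simpa [Complex.ext_iff, pow_two, Complex.mul_re, Complex.mul_im, him] using this
      nlinarith [sq_nonneg (2 * z.re + a)]
    have hsum : z + (starRingEnd ℂ) z = -(a:ℂ) := by
      have key : (z - (starRingEnd ℂ) z) * (z + (starRingEnd ℂ) z + (a:ℂ)) = 0 := by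
        linear_combination h - hconj
      rcases mul_eq_zero.mp key with hk | hk
      · exact absurd (sub_eq_zero.mp hk) hne
      · linear_combination hk
    have hprod : z * (starRingEnd ℂ) z = (b:ℂ) := by
      linear_combination z * hsum - h
    have hnorm : (Complex.normSq z : ℂ) = (b:ℂ) := by
      rw [← hprod, Complex.mul_conj]
    have hnr : Complex.normSq z = b := by exact_mod_cast hnorm
    have : 1 ≤ Complex.normSq z := by
      have := Complex.sq_norm z
      nlinarith
    linarith [hnr ▸ this]
end

section
/- Let n, k, δ, ω, n', w, b be as in the algorithm setup with n' ≥ 1, and set ℓ = ⌊(1+2^{k+1}δ)n / w⌋. Then ℓ ≤ ((1+2^kδ)/(2^{k-5}δ))·b. -/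
set_option maxHeartbeats 800000

/-- For `x ≥ 1`, `x ≤ 2⌊x⌋`. -/
lemma double_floor {x : ℝ} (hx : 1 ≤ x) : x ≤ 2 * (⌊x⌋ : ℝ) := by
  have h1 : (1 : ℤ) ≤ ⌊x⌋ := Int.le_floor.mpr (by exact_mod_cast hx)
  have h2 := Int.lt_floor_add_one x
  have : (1 : ℝ) ≤ (⌊x⌋ : ℝ) := by exact_mod_cast h1
  linarith

lemma omega_ge (ω : ℤ → ℤ) (h1 : ∀ i : ℤ, i ≤ 1 → ω i = 2)
    (hrec : ∀ i : ℤ, 2 ≤ i → ω i = ω (i - 1) + ω (i - 4)) :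
    ∀ i : ℤ, 2 ≤ ω i := by
  have key : ∀ m : ℕ, ∀ i : ℤ, i ≤ (m : ℤ) → 2 ≤ ω i := by
    intro m
    induction m with
    | zero => intro i hi; rw [h1 i (by omega)]
    | succ m ih =>
      intro i hi
      by_cases h : i ≤ 1
      · rw [h1 i h]
      · have h2 : 2 ≤ i := by omega
        rw [hrec i h2]
        have a := ih (i - 1) (by omega)
        have b := ih (i - 4) (by omega)
        omega
  intro i
  by_cases h : i ≤ 0
  · rw [h1 i (by omega)]
  · exact key i.toNat i (by omega)

theorem stmt_8 (n : ℕ) (hn : 1 ≤ n) (k : ℤ) (hk : 2 ≤ k) (δ : ℝ)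
    (hδ : 0 < δ) (hδ' : δ < 1 / 2)
    (ω : ℤ → ℤ) (h1 : ∀ i : ℤ, i ≤ 1 → ω i = 2)
    (hrec : ∀ i : ℤ, 2 ≤ i → ω i = ω (i - 1) + ω (i - 4))
    (b n' w ℓ : ℤ)
    (hb : b = ⌊(n : ℝ) ^ ((ω (k - 4) : ℝ) / (ω k : ℝ))⌋)
    (hn' : n' = ⌊2 ^ (k - 1) * δ / (1 + 2 ^ k * δ) * (n : ℝ) ^ ((ω (k - 1) : ℝ) / (ω k : ℝ))⌋)
    (hn'1 : 1 ≤ n')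
    (hpow1 : 1 ≤ (n : ℝ) ^ ((ω (k - 1) : ℝ) / (ω k : ℝ)))
    (hw : w = ⌊(1 + 2 ^ k * δ) * (n' : ℝ)⌋)
    (hℓ : ℓ = ⌊(1 + 2 ^ (k + 1) * δ) * (n : ℝ) / (w : ℝ)⌋) :
    (ℓ : ℝ) ≤ (1 + 2 ^ k * δ) / (2 ^ (k - 5) * δ) * (b : ℝ) := by
  have hω := omega_ge ω h1 hrec
  set c : ℝ := 2 ^ k * δ with hc_def
  have h2k : (0 : ℝ) < (2:ℝ) ^ k := by positivity
  have hc : 0 < c := by positivity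
  have hn1 : (1 : ℝ) ≤ (n : ℝ) := by exact_mod_cast hn
  have hnpos : (0 : ℝ) < (n : ℝ) := by linarith
  -- ω facts
  have hωk : (0:ℝ) < (ω k : ℝ) := by exact_mod_cast lt_of_lt_of_le (by norm_num) (hω k)
  have hωk1 : (0:ℝ) < (ω (k-1) : ℝ) := by exact_mod_cast lt_of_lt_of_le (by norm_num) (hω (k-1))
  have hωk4 : (0:ℝ) < (ω (k-4) : ℝ) := by exact_mod_cast lt_of_lt_of_le (by norm_num) (hω (k-4))
  have hsum : (ω k : ℝ) = (ω (k-1) : ℝ) + (ω (k-4) : ℝ) := by exact_mod_cast hrec k hk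
  set P : ℝ := (n : ℝ) ^ ((ω (k - 1) : ℝ) / (ω k : ℝ)) with hP_def
  set Q : ℝ := (n : ℝ) ^ ((ω (k - 4) : ℝ) / (ω k : ℝ)) with hQ_def
  have hPQ : P * Q = (n : ℝ) := by
    rw [hP_def, hQ_def, ← Real.rpow_add hnpos, ← add_div, ← hsum,
      div_self (ne_of_gt hωk), Real.rpow_one]
  have hQ1 : (1 : ℝ) ≤ Q := by
    have : (n:ℝ) ^ (0:ℝ) ≤ Q := by
      apply Real.rpow_le_rpow_of_exponent_le hn1
      positivity
    rwa [Real.rpow_zero] at this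
  have hPpos : 0 < P := by linarith
  have hQpos : 0 < Q := by linarith
  -- b facts
  have hb1 : (1 : ℝ) ≤ (b : ℝ) := by
    have : (1:ℤ) ≤ b := by rw [hb]; exact Int.le_floor.mpr (by exact_mod_cast hQ1)
    exact_mod_cast this
  have hQ2b : Q ≤ 2 * (b : ℝ) := by rw [hb]; exact double_floor hQ1
  -- powers of two
  have h2km1 : (2:ℝ) ^ (k - 1) = 2 ^ k / 2 := by
    rw [zpow_sub₀ (two_ne_zero), zpow_one]
  have h2kp1 : (2:ℝ) ^ (k + 1) = 2 ^ k * 2 := by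
    rw [zpow_add₀ (two_ne_zero), zpow_one]
  have h2km5 : (2:ℝ) ^ (k - 5) = 2 ^ k / 32 := by
    rw [zpow_sub₀ (two_ne_zero)]; norm_num
  -- n' facts
  have hAP1 : (1:ℝ) ≤ 2 ^ (k - 1) * δ / (1 + c) * P := by
    have : (1:ℤ) ≤ n' := hn'1
    rw [hn'] at this
    exact_mod_cast Int.le_floor.mp this
  have hn'ge : 2 ^ (k - 1) * δ / (1 + c) * P ≤ 2 * (n' : ℝ) := by
    rw [hn']; exact double_floor hAP1
  have hn'1R : (1:ℝ) ≤ (n' : ℝ) := by exact_mod_cast hn'1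
  -- w facts
  have hwge : (1 + c) * (n' : ℝ) ≤ 2 * (w : ℝ) := by
    rw [hw]; exact double_floor (by nlinarith)
  have hkey : c * P / 8 ≤ (w : ℝ) := by
    have e1 : (1 + c) * (2 ^ (k - 1) * δ / (1 + c) * P) = c / 2 * P := by
      rw [h2km1]; field_simp; ring
    have h1c : (0:ℝ) < 1 + c := by linarith
    nlinarith [mul_le_mul_of_nonneg_left hn'ge (le_of_lt h1c)]
  have hwpos : (0:ℝ) < (w : ℝ) := by nlinarith
  -- ℓ bound
  have hl1 : (ℓ : ℝ) ≤ (1 + 2 * c) * (n : ℝ) / (w : ℝ) := by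
    rw [hℓ]
    calc (⌊(1 + 2 ^ (k+1) * δ) * (n : ℝ) / (w : ℝ)⌋ : ℝ)
        ≤ (1 + 2 ^ (k+1) * δ) * (n : ℝ) / (w : ℝ) := Int.floor_le _
      _ = (1 + 2 * c) * (n : ℝ) / (w : ℝ) := by rw [h2kp1, hc_def]; ring_nf
  have hnum : (0:ℝ) < (1 + 2 * c) * (n : ℝ) := by positivity
  have hden : (0:ℝ) < c * P / 8 := by positivity
  have hl2 : (1 + 2 * c) * (n : ℝ) / (w : ℝ) ≤ (1 + 2 * c) * (n : ℝ) / (c * P / 8) := by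
    gcongr
  have hl3 : (1 + 2 * c) * (n : ℝ) / (c * P / 8) = 8 * (1 + 2 * c) * Q / c := by
    rw [← hPQ]; field_simp
  have hl4 : 8 * (1 + 2 * c) * Q / c ≤ 8 * (1 + 2 * c) * (2 * b) / c := by
    gcongr 8 * (1 + 2 * c) * ?_ / c
  have hrhs : (1 + c) / (2 ^ (k - 5) * δ) * (b : ℝ) = 32 * (1 + c) * b / c := by
    rw [h2km5, hc_def]; field_simp
  rw [hrhs]
  calc (ℓ : ℝ) ≤ (1 + 2 * c) * (n : ℝ) / (w : ℝ) := hl1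
    _ ≤ (1 + 2 * c) * (n : ℝ) / (c * P / 8) := hl2
    _ = 8 * (1 + 2 * c) * Q / c := hl3
    _ ≤ 8 * (1 + 2 * c) * (2 * b) / c := hl4
    _ ≤ 32 * (1 + c) * b / c := by
        apply div_le_div_of_nonneg_right ?_ hc.le
        nlinarith
end
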